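/- Let δ ≥ 1, α ∈ (0,1), and let A be the 2×2 matrix with rows (δ+1, δ−1) and (δ−1, δ+1). Then min_{Q ∈ O(2)} trace{ A^{1/2} J_α A^{1/2} (I − Q) } = α(δ+1) − √( α²(δ+1)² + 16(1−α)δ ), and this quantity is strictly negative for every δ ≥ 1 and α ∈ (0,1). -/

import Mathlib

open MeasureTheory Matrix

noncomputable section

abbrev EucSp (n : ℕ) := EuclideanSpace ℝ (Fin n)

/-- Principal square root of a positive semidefinite matrix (zero otherwise). -/
noncomputable def msqrt {n : ℕ} (A : Matrix (Fin n) (Fin n) ℝ) : Matrix (Fin n) (Fin n) ℝ :=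
  open scoped Classical in
  if h : A.PosSemidef then
    h.1.eigenvectorUnitary.1 * diagonal ((↑) ∘ (√·) ∘ h.1.eigenvalues) *
      (star h.1.eigenvectorUnitary : Matrix (Fin n) (Fin n) ℝ)
  else 0

/-- `A ∈ 𝒜(λ,Λ)`: symmetric and uniformly elliptic. -/
def UnifElliptic {n : ℕ} (lam Lam : ℝ) (A : Matrix (Fin n) (Fin n) ℝ) : Prop :=
  A.IsSymm ∧ ∀ ξ : Fin n → ℝ,
    lam * (ξ ⬝ᵥ ξ) ≤ ξ ⬝ᵥ A.mulVec ξ ∧ ξ ⬝ᵥ A.mulVec ξ ≤ Lam * (ξ ⬝ᵥ ξ)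

/-- Membership in the orthogonal group `O(n)`. -/
def IsOrthMat {n : ℕ} (Q : Matrix (Fin n) (Fin n) ℝ) : Prop :=
  Q * Qᵀ = 1 ∧ Qᵀ * Q = 1

/-- Matrix acting on Euclidean space. -/
noncomputable def mvE {n : ℕ} (M : Matrix (Fin n) (Fin n) ℝ) (y : EucSp n) : EucSp n :=
  (EuclideanSpace.equiv (Fin n) ℝ).symm (M.mulVec ((EuclideanSpace.equiv (Fin n) ℝ) y))

/-- The ellipsoid `x + ε A^{1/2} 𝔹`. -/
noncomputable def ellipsoid {n : ℕ} (ε : ℝ) (M : Matrix (Fin n) (Fin n) ℝ) (x : EucSp n) :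
    Set (EucSp n) :=
  (fun y => x + ε • mvE (msqrt M) y) '' Metric.ball (0 : EucSp n) 1

/-- The matrix `J_α = diag(α-1, 1, …, 1)`. -/
noncomputable def Jmat (n : ℕ) (α : ℝ) : Matrix (Fin n) (Fin n) ℝ :=
  Matrix.diagonal (fun i => if (i : ℕ) = 0 then α - 1 else 1)

/-- Reflection in the first coordinate axis. -/
noncomputable def J0 (n : ℕ) : Matrix (Fin n) (Fin n) ℝ :=
  Matrix.diagonal (fun i => if (i : ℕ) = 0 then -1 else 1)

/-- The first standard basis vector `e₁`. -/
noncomputable def e1 (n : ℕ) : EucSp n :=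
  (EuclideanSpace.equiv (Fin n) ℝ).symm (fun i => if (i : ℕ) = 0 then 1 else 0)

/-- `f₁(x,z) = C|x-z|^α + C̃|x+z|²`. -/
noncomputable def f1 {n : ℕ} (α C Ct : ℝ) (x z : EucSp n) : ℝ :=
  C * ‖x - z‖ ^ α + Ct * ‖x + z‖ ^ 2

/-- The annular step function `f₂`. -/
noncomputable def f2 {n : ℕ} (α C lam ε : ℝ) (N : ℕ) (x z : EucSp n) : ℝ :=
  if ‖x - z‖ / (Real.sqrt lam * ε) > (N : ℝ) then 0
  else C ^ (2 * (2 * N - ⌈2 * ‖x - z‖ / (Real.sqrt lam * ε)⌉₊)) * ε ^ α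

/-!
For `S = A^{1/2}` put `M = S J_α S`. It is symmetric with `tr M = tr (S² J_α) = α(δ+1)` and
`det M = det A · det J_α = 4δ(α-1) < 0`, so the explicit form of `A^{1/2}` is never needed.
An orthogonal `2×2` matrix is a rotation or a reflection. For `M = [[p, q], [q, u]]` a rotation
by `θ` gives `tr (MQ) = (p+u) cos θ ≤ |tr M|`, and a reflection gives
`(p-u) cos θ + 2q sin θ ≤ √((p-u)² + 4q²) = √(tr² M - 4 det M)`, with equality for a suitable `θ`.
As `det M ≤ 0` the reflection bound dominates, so `tr (M(I-Q)) = tr M - tr (MQ)` is minimised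
at the value `tr M - √(tr² M - 4 det M)`.
-/

section Msqrt

open scoped MatrixOrder

variable {n : ℕ} {A : Matrix (Fin n) (Fin n) ℝ}

lemma msqrt_eq_cfcSqrt (hA : A.PosSemidef) : msqrt A = CFC.sqrt A := by
  rw [CFC.sqrt_eq_real_sqrt _ (nonneg_iff_posSemidef.mpr hA), cfcₙ_eq_cfc, hA.1.cfc_eq]
  simp only [msqrt, dif_pos hA, IsHermitian.cfc, Unitary.conjStarAlgAut_apply]
  rfl

lemma msqrt_mul_self (hA : A.PosSemidef) : msqrt A * msqrt A = A := by
  rw [msqrt_eq_cfcSqrt hA]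
  exact CFC.sqrt_mul_sqrt_self A (nonneg_iff_posSemidef.mpr hA)

lemma isSymm_msqrt (hA : A.PosSemidef) : (msqrt A).IsSymm := by
  rw [msqrt_eq_cfcSqrt hA]
  exact (nonneg_iff_posSemidef.mp (CFC.sqrt_nonneg A)).1

end Msqrt

namespace Matrix

variable {n R : Type*} [Fintype n] [CommRing R] {S J : Matrix n n R}

lemma IsSymm.mul_mul_of_isSymm (hS : S.IsSymm) (hJ : J.IsSymm) : (S * J * S).IsSymm := by
  simp only [IsSymm, transpose_mul, hS.eq, hJ.eq, mul_assoc]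

lemma trace_mul_mul_self (S J : Matrix n n R) : trace (S * J * S) = trace (S * S * J) :=
  trace_mul_cycle S J S

lemma det_mul_mul_self [DecidableEq n] (S J : Matrix n n R) :
    det (S * J * S) = det (S * S) * det J := by
  simp only [det_mul]; ring

end Matrix

lemma posSemidef_fin_two_of {a b d : ℝ} (ha : 0 ≤ a) (hd : 0 ≤ d) (hdet : b ^ 2 ≤ a * d) :
    !![a, b; b, d].PosSemidef := by
  rw [posSemidef_iff_dotProduct_mulVec]
  refine ⟨by ext i j; fin_cases i <;> fin_cases j <;> rfl, fun x => ?_⟩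
  simp only [dotProduct, Pi.star_apply, star_trivial, mulVec, of_apply, cons_val',
    cons_val_fin_one, Fin.sum_univ_two, Fin.isValue, cons_val_zero, cons_val_one]
  rcases ha.eq_or_lt with rfl | ha
  · obtain rfl : b = 0 := by nlinarith
    nlinarith [mul_nonneg hd (sq_nonneg (x 1))]
  · -- `a • xᵀ M x = (a x₀ + b x₁)² + (a d - b²) x₁²`
    nlinarith [sq_nonneg (a * x 0 + b * x 1), mul_nonneg (sub_nonneg.2 hdet) (sq_nonneg (x 1))]

lemma Jmat_two (α : ℝ) : Jmat 2 α = !![α - 1, 0; 0, 1] := by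
  ext i j; fin_cases i <;> fin_cases j <;> simp [Jmat]

lemma IsOrthMat.fin_two {Q : Matrix (Fin 2) (Fin 2) ℝ} (hQ : IsOrthMat Q) :
    ∃ c s : ℝ, c ^ 2 + s ^ 2 = 1 ∧ (Q = !![c, -s; s, c] ∨ Q = !![c, s; s, -c]) := by
  obtain ⟨h1, h2⟩ := hQ
  have hdet : Q.det * Q.det = 1 := by
    simpa [det_transpose] using congr_arg det h2
  -- `Qᵀ = Q⁻¹ = adj Q / det Q`, and `det Q = ±1`
  have hadj : adjugate Q = Q.det • Qᵀ := by
    rw [← mul_one (adjugate Q), ← h1, ← mul_assoc, adjugate_mul, smul_one_mul]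
  have hcol : Q 0 0 ^ 2 + Q 1 0 ^ 2 = 1 := by
    simpa [mul_apply, Fin.sum_univ_two, sq] using congr_fun (congr_fun h2 0) 0
  refine ⟨Q 0 0, Q 1 0, hcol, ?_⟩
  rw [adjugate_fin_two] at hadj
  have e01 := congr_fun (congr_fun hadj 0) 1
  have e10 := congr_fun (congr_fun hadj 1) 0
  have e11 := congr_fun (congr_fun hadj 1) 1
  simp only [Fin.isValue, of_apply, cons_val', cons_val_one, cons_val_fin_one, cons_val_zero,
    Matrix.smul_apply, transpose_apply, smul_eq_mul] at e01 e10 e11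
  rw [eta_fin_two Q]
  rcases mul_self_eq_one_iff.mp hdet with h | h <;> rw [h] at e01 e10 e11
  · left
    ext i j; fin_cases i <;> fin_cases j <;> simp <;> linarith
  · right
    ext i j; fin_cases i <;> fin_cases j <;> simp <;> linarith

lemma isOrthMat_reflection {c s : ℝ} (h : c ^ 2 + s ^ 2 = 1) : IsOrthMat !![c, s; s, -c] := by
  constructor <;>
  · ext i j
    fin_cases i <;> fin_cases j <;> simp [mul_apply, Fin.sum_univ_two] <;> grind

lemma mul_add_mul_le_sqrt {c s : ℝ} (h : c ^ 2 + s ^ 2 = 1) (d e : ℝ) :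
    d * c + e * s ≤ √(d ^ 2 + e ^ 2) :=
  Real.le_sqrt_of_sq_le <| by nlinarith [sq_nonneg (d * s - e * c)]

lemma exists_mul_add_mul_eq_sqrt (d e : ℝ) :
    ∃ c s : ℝ, c ^ 2 + s ^ 2 = 1 ∧ d * c + e * s = √(d ^ 2 + e ^ 2) := by
  rcases eq_or_ne (d ^ 2 + e ^ 2) 0 with h | h
  · refine ⟨1, 0, by norm_num, ?_⟩
    rw [h, Real.sqrt_zero]
    nlinarith [sq_nonneg d, sq_nonneg e]
  · have hr : √(d ^ 2 + e ^ 2) ≠ 0 := by positivity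
    have hsq := Real.sq_sqrt (by positivity : 0 ≤ d ^ 2 + e ^ 2)
    refine ⟨d / √(d ^ 2 + e ^ 2), e / √(d ^ 2 + e ^ 2), ?_, ?_⟩
    · field_simp; linarith
    · field_simp; linarith

lemma isLeast_trace_mul_one_sub_orth {M : Matrix (Fin 2) (Fin 2) ℝ} (hM : M.IsSymm)
    (hdet : M.det ≤ 0) :
    IsLeast {t | ∃ Q, IsOrthMat Q ∧ t = trace (M * (1 - Q))}
      (trace M - √(trace M ^ 2 - 4 * M.det)) := by
  obtain ⟨p, q, u, rfl⟩ : ∃ p q u, M = !![p, q; q, u] :=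
    ⟨M 0 0, M 0 1, M 1 1, (eta_fin_two M).trans (by rw [hM.apply 0 1])⟩
  have hdisc : trace !![p, q; q, u] ^ 2 - 4 * det !![p, q; q, u] = (p - u) ^ 2 + (2 * q) ^ 2 := by
    rw [trace_fin_two_of, det_fin_two_of]; ring
  have htrace (Q : Matrix (Fin 2) (Fin 2) ℝ) :
      trace (!![p, q; q, u] * (1 - Q)) = trace !![p, q; q, u] - trace (!![p, q; q, u] * Q) := by
    rw [mul_sub, mul_one, trace_sub]
  rw [hdisc]
  constructor
  · obtain ⟨c, s, hcs, hmax⟩ := exists_mul_add_mul_eq_sqrt (p - u) (2 * q)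
    refine ⟨_, isOrthMat_reflection hcs, ?_⟩
    rw [htrace, ← hmax, mul_fin_two]
    simp only [trace_fin_two_of]
    ring
  · rintro t ⟨Q, hQ, rfl⟩
    rw [htrace, sub_le_sub_iff_left]
    obtain ⟨c, s, hcs, rfl | rfl⟩ := hQ.fin_two
    · rw [mul_fin_two, trace_fin_two_of]
      calc p * c + q * s + (q * -s + u * c) = (p + u) * c + 0 * s := by ring
        _ ≤ √((p + u) ^ 2 + 0 ^ 2) := mul_add_mul_le_sqrt hcs _ _
        _ ≤ √((p - u) ^ 2 + (2 * q) ^ 2) := by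
          refine Real.sqrt_le_sqrt ?_
          rw [det_fin_two_of] at hdet
          nlinarith
    · rw [mul_fin_two, trace_fin_two_of]
      calc p * c + q * s + (q * s + u * -c) = (p - u) * c + 2 * q * s := by ring
        _ ≤ √((p - u) ^ 2 + (2 * q) ^ 2) := mul_add_mul_le_sqrt hcs _ _

/-- the optimal coupling for the explicit 2×2 example
(Example 6.2, optimal coupling part). -/
theorem stmt16 (δ : ℝ) (hδ : 1 ≤ δ) (α : ℝ) (hα : α ∈ Set.Ioo (0 : ℝ) 1) :
    IsLeast {t : ℝ | ∃ Q, IsOrthMat Q ∧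
        t = Matrix.trace (msqrt !![δ + 1, δ - 1; δ - 1, δ + 1] * Jmat 2 α *
              msqrt !![δ + 1, δ - 1; δ - 1, δ + 1] * (1 - Q))}
      (α * (δ + 1) - Real.sqrt (α ^ 2 * (δ + 1) ^ 2 + 16 * (1 - α) * δ)) ∧
    α * (δ + 1) - Real.sqrt (α ^ 2 * (δ + 1) ^ 2 + 16 * (1 - α) * δ) < 0 := by
  obtain ⟨hα0, hα1⟩ := hα
  set A : Matrix (Fin 2) (Fin 2) ℝ := !![δ + 1, δ - 1; δ - 1, δ + 1]
  have hA : A.PosSemidef := posSemidef_fin_two_of (by linarith) (by linarith) (by nlinarith)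
  set M := msqrt A * Jmat 2 α * msqrt A
  have htrace : trace M = α * (δ + 1) := by
    rw [trace_mul_mul_self, msqrt_mul_self hA, Jmat_two, mul_fin_two, trace_fin_two_of]; ring
  have hdet : det M = 4 * δ * (α - 1) := by
    rw [det_mul_mul_self, msqrt_mul_self hA, Jmat_two, det_fin_two_of, det_fin_two_of]; ring
  have hdisc : trace M ^ 2 - 4 * det M = α ^ 2 * (δ + 1) ^ 2 + 16 * (1 - α) * δ := by
    rw [htrace, hdet]; ring
  refine ⟨?_, ?_⟩
  · rw [← htrace, ← hdisc]
    exact isLeast_trace_mul_one_sub_orth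
      ((isSymm_msqrt hA).mul_mul_of_isSymm (isSymm_diagonal _)) (by rw [hdet]; nlinarith)
  · rw [sub_neg, Real.lt_sqrt (by positivity)]
    nlinarith
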